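/- For any n×n complex matrix A, the block matrix [[|A|, A*], [A, |A*|]] is positive semidefinite. -/

import Mathlib

open Matrix
open scoped ComplexOrder

/-- The positive semidefinite square root of a positive semidefinite matrix
(the definition removed from Mathlib, restored with its old value). -/
noncomputable def Matrix.PosSemidef.sqrt {n 𝕜 : Type*} [Fintype n] [DecidableEq n] [RCLike 𝕜]
    {A : Matrix n n 𝕜} (hA : A.PosSemidef) : Matrix n n 𝕜 :=
  hA.1.eigenvectorUnitary.1 * diagonal ((↑) ∘ (√·) ∘ hA.1.eigenvalues) *
  (star hA.1.eigenvectorUnitary : Matrix n n 𝕜)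

theorem Matrix.PosSemidef.posSemidef_sqrt {n 𝕜 : Type*} [Fintype n] [DecidableEq n] [RCLike 𝕜]
    {A : Matrix n n 𝕜} (hA : A.PosSemidef) : hA.sqrt.PosSemidef := by
  unfold Matrix.PosSemidef.sqrt
  have h := (Matrix.PosSemidef.diagonal (R := 𝕜) (n := n)
    (d := (↑) ∘ (√·) ∘ hA.1.eigenvalues) (fun i => by
      simp only [Pi.zero_apply, Function.comp_apply]
      exact_mod_cast Real.sqrt_nonneg _)).mul_mul_conjTranspose_same
    (hA.1.eigenvectorUnitary.1)
  simpa [Matrix.star_eq_conjTranspose] using h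

/-- The `j`-th largest singular value of a square complex matrix (`j : Fin m`, zero-indexed,
so `sv A 0` is the largest singular value). It is defined as the square root of the `j`-th
largest eigenvalue of `Aᴴ * A`. -/
noncomputable def sv {m : ℕ} (A : Matrix (Fin m) (Fin m) ℂ) (j : Fin m) : ℝ :=
  Real.sqrt ((Matrix.isHermitian_conjTranspose_mul_self A).eigenvalues
    (Tuple.sort ((Matrix.isHermitian_conjTranspose_mul_self A).eigenvalues) j.rev))

/-- The absolute value `|A| = (Aᴴ A)^{1/2}` of a square complex matrix. -/
noncomputable def matAbs {m : ℕ} (A : Matrix (Fin m) (Fin m) ℂ) : Matrix (Fin m) (Fin m) ℂ :=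
  (Matrix.posSemidef_conjTranspose_mul_self A).sqrt

/-- The `2n × 2n` block matrix `[[A, B], [C, D]]`, reindexed by `Fin (n + n)`. -/
noncomputable def blk {n : ℕ} (A B C D : Matrix (Fin n) (Fin n) ℂ) :
    Matrix (Fin (n + n)) (Fin (n + n)) ℂ :=
  Matrix.reindex finSumFinEquiv finSumFinEquiv (Matrix.fromBlocks A B C D)

/-- `f(P)` for a Hermitian matrix `P`, via the spectral functional calculus. -/
noncomputable def herCfc {m : ℕ} {P : Matrix (Fin m) (Fin m) ℂ} (hP : P.IsHermitian)
    (f : ℝ → ℝ) : Matrix (Fin m) (Fin m) ℂ :=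
  hP.cfc f

/-- `|A| ^ r` (real power of the absolute value), via the functional calculus. -/
noncomputable def matAbsPow {m : ℕ} (A : Matrix (Fin m) (Fin m) ℂ) (r : ℝ) :
    Matrix (Fin m) (Fin m) ℂ :=
  herCfc (Matrix.posSemidef_conjTranspose_mul_self A).posSemidef_sqrt.1 (fun t => t ^ r)

/-- `f(|A|)`, via the functional calculus. -/
noncomputable def matAbsCfc {m : ℕ} (A : Matrix (Fin m) (Fin m) ℂ) (f : ℝ → ℝ) :
    Matrix (Fin m) (Fin m) ℂ :=
  herCfc (Matrix.posSemidef_conjTranspose_mul_self A).posSemidef_sqrt.1 f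

/-- The operator norm: the largest singular value. -/
noncomputable def opNorm {m : ℕ} (A : Matrix (Fin m) (Fin m) ℂ) : ℝ :=
  ⨆ j, sv A j

/-!
Write `P = AᴴA`, `Q = AAᴴ`, so `|A| = √P` and `|Aᴴ| = √Q`. Since `A P = Q A`, every polynomial,
hence (the spectra being finite, by interpolation) every function of `P` and `Q` is intertwined by
`A`: `A f(P) = f(Q) A`. Let `R = f(Q)` for `f x = (√x)⁻¹`, the pseudo-inverse of `|Aᴴ|` (thanks
to `0⁻¹ = 0`), and `N = [A | |Aᴴ|]`. Intertwining, together with the fact that `Aᴴ` vanishes on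
`ker Q`, gives `[[|A|, Aᴴ], [A, |Aᴴ|]] = Nᴴ R N`, which is positive semidefinite because `R` is.
-/

open Polynomial
open scoped MatrixOrder

theorem SemiconjBy.aeval_right {R A : Type*} [CommSemiring R] [Semiring A] [Algebra R A]
    {x a b : A} (h : SemiconjBy x a b) (q : R[X]) : SemiconjBy x (aeval a q) (aeval b q) := by
  induction q using Polynomial.induction_on' with
  | add p r hp hr => simpa only [map_add] using hp.add_right hr
  | monomial k c =>
    simpa only [aeval_monomial] using
      SemiconjBy.mul_right (Algebra.commutes c x).symm (h.pow_right k)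

namespace Matrix

variable {n 𝕜 : Type*} [Fintype n] [DecidableEq n] [RCLike 𝕜]

theorem PosSemidef.sqrt_eq_cfc {A : Matrix n n 𝕜} (hA : A.PosSemidef) :
    hA.sqrt = cfc Real.sqrt A := by
  rw [hA.1.cfc_eq]
  rfl

theorem cfcAbs_eq_cfc_sqrt (A : Matrix n n 𝕜) : CFC.abs A = cfc Real.sqrt (Aᴴ * A) := by
  rw [CFC.abs, star_eq_conjTranspose,
    CFC.sqrt_eq_real_sqrt _ (posSemidef_conjTranspose_mul_self A).nonneg, cfcₙ_eq_cfc]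

theorem cfc_mul_cfc (A : Matrix n n 𝕜) (f g : ℝ → ℝ) :
    cfc f A * cfc g A = cfc (fun x => f x * g x) A :=
  (cfc_mul f g A (A.finite_real_spectrum.continuousOn f)
    (A.finite_real_spectrum.continuousOn g)).symm

theorem exists_aeval_eq_cfc_of_isSelfAdjoint {A B : Matrix n n 𝕜} (hA : IsSelfAdjoint A)
    (hB : IsSelfAdjoint B) (f : ℝ → ℝ) :
    ∃ q : ℝ[X], aeval A q = cfc f A ∧ aeval B q = cfc f B := by
  set s := (A.finite_real_spectrum.union B.finite_real_spectrum).toFinset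
  set q := Lagrange.interpolate s id f
  have hq : ∀ x ∈ s, q.eval x = f x := fun x hx =>
    Lagrange.eval_interpolate_at_node f Function.injective_id.injOn hx
  refine ⟨q, ?_, ?_⟩
  · rw [← cfc_polynomial q A]
    exact cfc_congr fun x hx => hq x (by simp [s, hx])
  · rw [← cfc_polynomial q B]
    exact cfc_congr fun x hx => hq x (by simp [s, hx])

theorem mul_cfc_conjTranspose_mul_self (A : Matrix n n 𝕜) (f : ℝ → ℝ) :
    A * cfc f (Aᴴ * A) = cfc f (A * Aᴴ) * A := by
  obtain ⟨q, hP, hQ⟩ := exists_aeval_eq_cfc_of_isSelfAdjoint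
    (isHermitian_conjTranspose_mul_self A).isSelfAdjoint
    (isHermitian_mul_conjTranspose_self A).isSelfAdjoint f
  rw [← hP, ← hQ]
  exact SemiconjBy.aeval_right (mul_assoc _ _ _).symm q

theorem mul_cfc_conjTranspose_mul_self_eq_self (A : Matrix n n 𝕜) {g : ℝ → ℝ}
    (hg : ∀ x, 0 < x → g x = 1) : A * cfc g (Aᴴ * A) = A := by
  have hP : (Aᴴ * A).PosSemidef := posSemidef_conjTranspose_mul_self A
  set F := cfc g (Aᴴ * A)
  have hF : Fᴴ = F := (cfc_predicate (p := IsSelfAdjoint) _ (Aᴴ * A)).star_eq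
  have hPF : Aᴴ * A * F = Aᴴ * A := by
    nth_rewrite 1 [← cfc_id' ℝ (Aᴴ * A)]
    rw [cfc_mul_cfc]
    nth_rewrite 2 [← cfc_id' ℝ (Aᴴ * A)]
    refine cfc_congr fun x hx => ?_
    rcases (spectrum_nonneg_of_nonneg hP.nonneg hx).eq_or_lt with rfl | hx0
    · simp
    · simp [hg x hx0]
  have hFP : F * Aᴴ * A = Aᴴ * A := by
    simpa [hF, mul_assoc] using congrArg conjTranspose hPF
  have h : (A - A * F)ᴴ * (A - A * F) = 0 := by
    simp only [conjTranspose_sub, conjTranspose_mul, hF, sub_mul, mul_sub, ← mul_assoc, hFP,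
      sub_self, zero_mul]
  rwa [conjTranspose_mul_self_eq_zero, sub_eq_zero, eq_comm] at h

theorem posSemidef_fromBlocks_cfcAbs (A : Matrix n n 𝕜) :
    (fromBlocks (CFC.abs A) Aᴴ A (CFC.abs Aᴴ)).PosSemidef := by
  rw [cfcAbs_eq_cfc_sqrt, cfcAbs_eq_cfc_sqrt, conjTranspose_conjTranspose]
  set T := cfc Real.sqrt (A * Aᴴ)
  set R := cfc (fun x => (√x)⁻¹) (A * Aᴴ)
  have hR : R.PosSemidef := (cfc_nonneg fun x _ => inv_nonneg.2 (Real.sqrt_nonneg x)).posSemidef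
  have hT : Tᴴ = T := (cfc_predicate (p := IsSelfAdjoint) _ (A * Aᴴ)).star_eq
  have hRT : R * T = cfc (fun x => (√x)⁻¹ * √x) (A * Aᴴ) := cfc_mul_cfc _ _ _
  have h11 : Aᴴ * R * A = cfc Real.sqrt (Aᴴ * A) := by
    rw [mul_assoc, ← mul_cfc_conjTranspose_mul_self, ← mul_assoc]
    nth_rewrite 1 [← cfc_id' ℝ (Aᴴ * A) (isHermitian_conjTranspose_mul_self A).isSelfAdjoint]
    rw [cfc_mul_cfc]
    exact cfc_congr fun x _ => Real.div_sqrt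
  have h12 : Aᴴ * R * T = Aᴴ := by
    have := mul_cfc_conjTranspose_mul_self_eq_self Aᴴ (g := fun x => (√x)⁻¹ * √x)
      fun x hx => inv_mul_cancel₀ (Real.sqrt_pos.2 hx).ne'
    rwa [conjTranspose_conjTranspose, ← hRT, ← mul_assoc] at this
  have h21 : T * R * A = A := by
    simpa [hT, hR.1.eq, mul_assoc] using congrArg conjTranspose h12
  have h22 : T * R * T = T := by
    rw [mul_assoc, hRT, cfc_mul_cfc]
    exact cfc_congr fun x _ => by rw [← mul_assoc, mul_inv_mul_cancel]
  have hblock :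
      fromBlocks (cfc Real.sqrt (Aᴴ * A)) Aᴴ A T = (fromCols A T)ᴴ * R * fromCols A T := by
    rw [conjTranspose_fromCols_eq_fromRows_conjTranspose, fromRows_mul, fromRows_mul_fromCols, hT,
      h11, h12, h21, h22]
  rw [hblock]
  exact hR.conjTranspose_mul_mul_same _

end Matrix

theorem matAbs_eq_cfcAbs {m : ℕ} (A : Matrix (Fin m) (Fin m) ℂ) : matAbs A = CFC.abs A := by
  rw [matAbs, PosSemidef.sqrt_eq_cfc, cfcAbs_eq_cfc_sqrt]

theorem abs_block_posSemidef {n : ℕ} (A : Matrix (Fin n) (Fin n) ℂ) :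
    (blk (matAbs A) Aᴴ A (matAbs Aᴴ)).PosSemidef := by
  rw [blk, matAbs_eq_cfcAbs, matAbs_eq_cfcAbs, reindex_apply]
  exact (posSemidef_submatrix_equiv _).mpr (posSemidef_fromBlocks_cfcAbs A)
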